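/- arXiv:1705.02188 — 2 statements merged into one kernel-verified Lean document; each statement's English description precedes it below -/
import Mathlib

section
/- Let A and B be n×n complex positive definite matrices with Tr[A] = Tr[B] = 1 (density matrices), and let p ∈ [1/2, 1]. Then Tr[T_{1/2}(A|B)] ≤ Tr[T_p(A|B)]. -/
open Matrix ComplexOrder

/-- Real power of a (Hermitian) complex matrix via the continuous functional calculus,
corresponding to `Matrix.PosDef.rpow` on positive definite matrices. -/
noncomputable def mrpow {n : Type*} [Fintype n] [DecidableEq n]
    (A : Matrix n n ℂ) (r : ℝ) : Matrix n n ℂ :=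
  cfc (fun t : ℝ => t ^ r) A

/-- The Loewner order: `loe X Y` means `Y - X` is positive semidefinite. -/
def loe {n : Type*} [Fintype n] (X Y : Matrix n n ℂ) : Prop :=
  (Y - X).PosSemidef

/-- `A ♮ᵣ B = A^{1/2} (A^{-1/2} B A^{-1/2})^r A^{1/2}`; for `r ∈ [0,1]` this is the
weighted geometric mean `A #ᵣ B`. -/
noncomputable def natu {n : Type*} [Fintype n] [DecidableEq n]
    (A B : Matrix n n ℂ) (r : ℝ) : Matrix n n ℂ :=
  mrpow A (1 / 2) * mrpow (mrpow A (-(1 / 2)) * B * mrpow A (-(1 / 2))) r * mrpow A (1 / 2)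

/-- The Tsallis relative operator entropy `T_p(A|B) = (A #_p B - A) / p`. -/
noncomputable def TsallisEntropy {n : Type*} [Fintype n] [DecidableEq n]
    (A B : Matrix n n ℂ) (p : ℝ) : Matrix n n ℂ :=
  (1 / p : ℝ) • (natu A B p - A)

/-!
Write `C = A^{-1/2} B A^{-1/2}`. Since `A^{1/2} A^{1/2} = A`, the Tsallis entropy is a congruence
`T_q(A|B) = A^{1/2} f_q(C) A^{1/2}` of the functional calculus of `f_q(t) = (t^q - 1)/q`.
By Bernoulli's inequality `q ↦ f_q(t)` is monotone for `t ≥ 0`, so `f_q(C) ≤ f_p(C)` for `q ≤ p`.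
Congruence preserves the Loewner order and the trace is monotone.
-/

open scoped MatrixOrder

theorem Real.rpow_sub_one_div_le_rpow_sub_one_div {t q p : ℝ} (ht : 0 ≤ t) (hq : 0 < q)
    (hqp : q ≤ p) : (t ^ q - 1) / q ≤ (t ^ p - 1) / p := by
  have hp : 0 < p := hq.trans_le hqp
  have bernoulli : 1 + p / q * (t ^ q - 1) ≤ (1 + (t ^ q - 1)) ^ (p / q) :=
    one_add_mul_self_le_rpow_one_add (by linarith [Real.rpow_nonneg ht q])
      ((one_le_div hq).mpr hqp)
  rw [add_sub_cancel, ← Real.rpow_mul ht, mul_div_cancel₀ p hq.ne'] at bernoulli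
  have hmul : p / q * (t ^ q - 1) ≤ t ^ p - 1 := by linarith
  rw [div_mul_eq_mul_div, div_le_iff₀ hq] at hmul
  rw [div_le_div_iff₀ hq hp]
  linarith

namespace Matrix

variable {n : Type*} [Fintype n]

theorem trace_re_le_trace_re {X Y : Matrix n n ℂ} (h : X ≤ Y) : X.trace.re ≤ Y.trace.re :=
  (Complex.le_def.mp ((tracePositiveLinearMap n ℝ ℂ).mono h)).1

variable [DecidableEq n]

theorem continuousOn_spectrum_real (f : ℝ → ℝ) (A : Matrix n n ℂ) :
    ContinuousOn f (spectrum ℝ A) :=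
  A.finite_real_spectrum.continuousOn f

end Matrix

section

variable {n : Type*} [Fintype n] [DecidableEq n]

theorem mrpow_isHermitian (A : Matrix n n ℂ) (r : ℝ) : (mrpow A r).IsHermitian :=
  cfc_predicate _ A

theorem mrpow_half_mul_mrpow_half {A : Matrix n n ℂ} (hA : A.PosSemidef) :
    mrpow A (1 / 2) * mrpow A (1 / 2) = A := by
  have hspec : ∀ t ∈ spectrum ℝ A, t ^ (1 / 2 : ℝ) * t ^ (1 / 2 : ℝ) = t := fun t ht => by
    rw [← Real.rpow_add' (spectrum_nonneg_of_nonneg hA.nonneg ht) (by norm_num)]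
    norm_num
  unfold mrpow
  rw [← cfc_mul _ _ A (continuousOn_spectrum_real _ A) (continuousOn_spectrum_real _ A),
    cfc_congr hspec, cfc_id' ℝ A]

theorem tsallisEntropy_eq_conj_cfc {A B : Matrix n n ℂ} (hA : A.PosSemidef)
    (hB : B.IsHermitian) (q : ℝ) :
    TsallisEntropy A B q = mrpow A (1 / 2) *
      cfc (fun t : ℝ => (t ^ q - 1) / q) (mrpow A (-(1 / 2)) * B * mrpow A (-(1 / 2))) *
      mrpow A (1 / 2) := by
  set C := mrpow A (-(1 / 2)) * B * mrpow A (-(1 / 2))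
  have hC : IsSelfAdjoint C := by
    have h := isHermitian_conjTranspose_mul_mul (mrpow A (-(1 / 2))) hB
    rwa [(mrpow_isHermitian A _).eq] at h
  have hfun : (fun t : ℝ => (t ^ q - 1) / q) = fun t => (1 / q) • (t ^ q - 1) := by
    funext t
    rw [smul_eq_mul, one_div_mul_eq_div]
  have hcfc : cfc (fun t : ℝ => (t ^ q - 1) / q) C = (1 / q : ℝ) • (mrpow C q - 1) := by
    rw [hfun, cfc_smul _ _ C (continuousOn_spectrum_real _ C),
      cfc_sub _ _ C (continuousOn_spectrum_real _ C) (continuousOn_spectrum_real _ C),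
      cfc_const_one ℝ C]
    rfl
  rw [hcfc, TsallisEntropy, natu, mul_smul_comm, smul_mul_assoc, mul_sub, sub_mul, mul_one,
    mrpow_half_mul_mrpow_half hA]

theorem tsallisEntropy_mono {A B : Matrix n n ℂ} (hA : A.PosSemidef) (hB : B.PosSemidef)
    {q p : ℝ} (hq : 0 < q) (hqp : q ≤ p) : TsallisEntropy A B q ≤ TsallisEntropy A B p := by
  set C := mrpow A (-(1 / 2)) * B * mrpow A (-(1 / 2))
  have hC : C.PosSemidef := by
    have h := hB.conjTranspose_mul_mul_same (mrpow A (-(1 / 2)))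
    rwa [(mrpow_isHermitian A _).eq] at h
  have hcfc : cfc (fun t : ℝ => (t ^ q - 1) / q) C ≤ cfc (fun t : ℝ => (t ^ p - 1) / p) C :=
    cfc_mono (fun t ht => Real.rpow_sub_one_div_le_rpow_sub_one_div
        (spectrum_nonneg_of_nonneg hC.nonneg ht) hq hqp)
      (continuousOn_spectrum_real _ C) (continuousOn_spectrum_real _ C)
  rw [tsallisEntropy_eq_conj_cfc hA hB.1, tsallisEntropy_eq_conj_cfc hA hB.1]
  exact (mrpow_isHermitian A _).isSelfAdjoint.conjugate_le_conjugate hcfc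

end

theorem stmt18_general {n : Type*} [Fintype n] [DecidableEq n] {A B : Matrix n n ℂ}
    (hA : A.PosDef) (hB : B.PosDef)
    {p : ℝ} (hp0 : 1 / 2 ≤ p) :
    ((TsallisEntropy A B (1 / 2)).trace).re ≤ ((TsallisEntropy A B p).trace).re :=
  Matrix.trace_re_le_trace_re (tsallisEntropy_mono hA.posSemidef hB.posSemidef (by norm_num) hp0)

theorem stmt18 {n : Type*} [Fintype n] [DecidableEq n] {A B : Matrix n n ℂ}
    (hA : A.PosDef) (hB : B.PosDef)
    (hTrA : (A.trace).re = 1) (hTrB : (B.trace).re = 1)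
    {p : ℝ} (hp0 : 1 / 2 ≤ p) (hp1 : p ≤ 1) :
    ((TsallisEntropy A B (1 / 2)).trace).re ≤ ((TsallisEntropy A B p).trace).re :=
  stmt18_general hA hB hp0
end

section
/- Let A and B be n×n complex positive definite matrices with Tr[A] = Tr[B] = 1 (density matrices), and let p ∈ (0, 1/2]. Then (1−p)·Tr[T_{1/2}(A|B)] + (2p−1)·Tr[B − A] ≤ p·Tr[T_p(A|B)]. -/
/-!
Weighted AM–GM gives `(2 - 2p) √t ≤ t ^ p + (1 - 2p) t` for `t ≥ 0` and `p ≤ 1/2`. Applied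
through the functional calculus to `C = A^{-1/2} B A^{-1/2}` and conjugated by `A^{1/2}`, it
yields the operator inequality `(2 - 2p) A #_{1/2} B ≤ A #_p B + (1 - 2p) B`. Taking traces gives
the claim, because `p T_p(A|B) = A #_p B - A` and the coefficients of `Tr A` on both sides agree.
-/

open Matrix ComplexOrder

open scoped MatrixOrder

namespace Real

theorem two_sub_two_mul_mul_rpow_half_le {p t : ℝ} (hp : p ≤ 1 / 2) (ht : 0 ≤ t) :
    (2 - 2 * p) * t ^ (1 / 2 : ℝ) ≤ t ^ p + (1 - 2 * p) * t := by
  have hw : 0 < 2 - 2 * p := by linarith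
  have amgm := geom_mean_le_arith_mean2_weighted (w₁ := 1 / (2 - 2 * p))
    (w₂ := (1 - 2 * p) / (2 - 2 * p)) (by positivity) (div_nonneg (by linarith) hw.le)
    (rpow_nonneg ht p) ht (by rw [← add_div, div_eq_one_iff_eq hw.ne']; ring)
  have hgeom :
      (t ^ p) ^ (1 / (2 - 2 * p)) * t ^ ((1 - 2 * p) / (2 - 2 * p)) = t ^ (1 / 2 : ℝ) := by
    have hexp : p * (1 / (2 - 2 * p)) + (1 - 2 * p) / (2 - 2 * p) = 1 / 2 := by
      rw [mul_one_div, ← add_div, div_eq_iff hw.ne']; ring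
    rw [← rpow_mul ht, ← rpow_add' ht (by rw [hexp]; norm_num), hexp]
  calc (2 - 2 * p) * t ^ (1 / 2 : ℝ)
      ≤ (2 - 2 * p) * (1 / (2 - 2 * p) * t ^ p + (1 - 2 * p) / (2 - 2 * p) * t) := by
        rw [← hgeom]; gcongr
    _ = t ^ p + (1 - 2 * p) * t := by
        rw [mul_add, ← mul_assoc, mul_one_div_cancel hw.ne', one_mul, ← mul_assoc,
          mul_div_cancel₀ _ hw.ne']

end Real

theorem Matrix.re_trace_le_re_trace {n : Type*} [Fintype n] {X Y : Matrix n n ℂ} (h : X ≤ Y) :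
    X.trace.re ≤ Y.trace.re := by
  have := (Complex.le_def.mp (h : (Y - X).PosSemidef).trace_nonneg).1
  rwa [trace_sub, Complex.sub_re, Complex.zero_re, sub_nonneg] at this

section GeometricMean

variable {n : Type*} [Fintype n] [DecidableEq n] {M : Matrix n n ℂ}

lemma isHermitian_mrpow (M : Matrix n n ℂ) (r : ℝ) : (mrpow M r).IsHermitian :=
  cfc_predicate _ M

lemma mrpow_zero (hM : M.IsHermitian) : mrpow M 0 = 1 := by
  simp only [mrpow, Real.rpow_zero]
  exact cfc_const_one ℝ M hM

lemma mrpow_add (hM : M.PosDef) (r s : ℝ) : mrpow M (r + s) = mrpow M r * mrpow M s := by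
  rw [mrpow, mrpow, mrpow, ← cfc_mul _ _ M (M.finite_real_spectrum.continuousOn _)
    (M.finite_real_spectrum.continuousOn _)]
  exact cfc_congr fun x hx => Real.rpow_add (hM.isStrictlyPositive.spectrum_pos hx) r s

lemma smul_mrpow_half_le {C : Matrix n n ℂ} (hC : C.PosSemidef) {p : ℝ} (hp : p ≤ 1 / 2) :
    (2 - 2 * p) • mrpow C (1 / 2) ≤ mrpow C p + (1 - 2 * p) • C := by
  have hcont (f : ℝ → ℝ) : ContinuousOn f (spectrum ℝ C) :=
    C.finite_real_spectrum.continuousOn f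
  calc (2 - 2 * p) • mrpow C (1 / 2)
      = cfc (fun t : ℝ => (2 - 2 * p) * t ^ (1 / 2 : ℝ)) C :=
        (cfc_const_mul _ _ C (hcont _)).symm
    _ ≤ cfc (fun t : ℝ => t ^ p + (1 - 2 * p) * t) C := cfc_mono (hf := hcont _) (hg := hcont _)
        fun t ht =>
          Real.two_sub_two_mul_mul_rpow_half_le hp (spectrum_nonneg_of_nonneg hC.nonneg ht)
    _ = mrpow C p + (1 - 2 * p) • C := by
        rw [cfc_add C _ _ (hcont _) (hcont _), cfc_const_mul _ _ C (hcont _),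
          cfc_id' ℝ C hC.isHermitian.isSelfAdjoint, mrpow]

lemma smul_natu_half_le {A B : Matrix n n ℂ} (hA : A.PosDef) (hB : B.PosSemidef) {p : ℝ}
    (hp : p ≤ 1 / 2) : (2 - 2 * p) • natu A B (1 / 2) ≤ natu A B p + (1 - 2 * p) • B := by
  set S := mrpow A (1 / 2)
  set T := mrpow A (-(1 / 2))
  have hS : S.IsHermitian := isHermitian_mrpow A _
  have hT : Tᴴ = T := isHermitian_mrpow A _
  have hST : S * T = 1 := by rw [← mrpow_add hA, add_neg_cancel, mrpow_zero hA.isHermitian]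
  have hTS : T * S = 1 := by rw [← mrpow_add hA, neg_add_cancel, mrpow_zero hA.isHermitian]
  have hC : (T * B * T).PosSemidef := by
    simpa only [hT] using hB.conjTranspose_mul_mul_same T
  have hB' : S * (T * B * T) * S = B := by
    rw [← mul_assoc, ← mul_assoc, hST, one_mul, mul_assoc, hTS, mul_one]
  have := hS.isSelfAdjoint.conjugate_le_conjugate (smul_mrpow_half_le hC hp)
  simpa only [natu, mul_add, add_mul, Matrix.mul_smul, Matrix.smul_mul, hB'] using this

lemma re_trace_tsallisEntropy (A B : Matrix n n ℂ) (p : ℝ) :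
    (TsallisEntropy A B p).trace.re = ((natu A B p).trace.re - A.trace.re) / p := by
  simp only [TsallisEntropy, trace_smul, trace_sub, Complex.smul_re, Complex.sub_re, smul_eq_mul]
  ring

end GeometricMean

theorem stmt19_general {n : Type*} [Fintype n] [DecidableEq n] {A B : Matrix n n ℂ}
    (hA : A.PosDef) (hB : B.PosDef)
    {p : ℝ} (hp0 : 0 < p) (hp1 : p ≤ 1 / 2) :
    (1 - p) * ((TsallisEntropy A B (1 / 2)).trace).re
        + (2 * p - 1) * (((B - A).trace).re)
      ≤ p * ((TsallisEntropy A B p).trace).re := by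
  have key := re_trace_le_re_trace (smul_natu_half_le hA hB.posSemidef hp1)
  simp only [trace_add, trace_smul, Complex.add_re, Complex.smul_re, smul_eq_mul] at key
  rw [re_trace_tsallisEntropy, re_trace_tsallisEntropy, mul_div_cancel₀ _ hp0.ne', trace_sub,
    Complex.sub_re]
  linarith

theorem stmt19 {n : Type*} [Fintype n] [DecidableEq n] {A B : Matrix n n ℂ}
    (hA : A.PosDef) (hB : B.PosDef)
    (hTrA : (A.trace).re = 1) (hTrB : (B.trace).re = 1)
    {p : ℝ} (hp0 : 0 < p) (hp1 : p ≤ 1 / 2) :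
    (1 - p) * ((TsallisEntropy A B (1 / 2)).trace).re
        + (2 * p - 1) * (((B - A).trace).re)
      ≤ p * ((TsallisEntropy A B p).trace).re :=
  stmt19_general hA hB hp0 hp1
end
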